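/- Every global state arising in the system R(Σ, Σ, id) (obtained by translating a strand space with each strand as a distinct agent) is message-equivalent to some bundle of Σ of finite height; and conversely every bundle of Σ of finite height is message-equivalent to some global state of R(Σ, Σ, id). -/

import Mathlib

/-!
In a chain for the identity agent assignment each step extends every strand by at most one
node and keeps what is already there, so the history of a strand at time `m` is the prefix of
its trace whose length is the strand's height in `B_m`: the global state at time `m` is
message-equivalent to `B_m`. That bundle has height at most `2m + 1`, because
`2 · (time at which a node appears) + [the node receives]` increases strictly along every causal
edge.

Conversely, a bundle of height `k` is the last bundle of the chain whose `j`-th member consists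
of the nodes of depth `< j` (depth being the length of a longest causal path ending at the
node). Depth increases along causal edges, so every member is a bundle and two consecutive nodes
of a strand never appear in the same step.
-/

namespace StrandPaper

/-- A strand space over a message set `M`: a type of strands, each with a trace,
a finite sequence of signed terms.  A signed term `(true, u)` is `+u` (send) and
`(false, u)` is `-u` (receive). -/
structure StrandSpace (M : Type) where
  Strand : Type
  tr : Strand → List (Bool × M)

namespace StrandSpace

variable {M α : Type}

/-- Nodes are pairs of a strand and a (1-based) index. -/
abbrev Node (S : StrandSpace M) : Type := S.Strand × ℕ

/-- The signed term at a node (if the index is valid). -/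
def term (S : StrandSpace M) (n : S.Node) : Option (Bool × M) := (S.tr n.1)[n.2 - 1]?

def IsNode (S : StrandSpace M) (n : S.Node) : Prop := 1 ≤ n.2 ∧ n.2 ≤ (S.tr n.1).length

/-- `n1 → n2`: `term n1 = +u` and `term n2 = -u`. -/
def SendsTo (S : StrandSpace M) (n1 n2 : S.Node) : Prop :=
  ∃ u, S.term n1 = some (true, u) ∧ S.term n2 = some (false, u)

/-- `n1 ⇒ n2`: consecutive nodes of the same strand. -/
def SuccEdge (S : StrandSpace M) (n1 n2 : S.Node) : Prop :=
  n2.1 = n1.1 ∧ n2.2 = n1.2 + 1 ∧ S.IsNode n1 ∧ S.IsNode n2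

/-- A (possibly infinite) bundle: a subgraph of `(N, → ∪ ⇒)` satisfying B2–B4:
every negative node has a unique incoming `→` edge, `⇒`-downward closure and
acyclicity. -/
structure Bundle (S : StrandSpace M) where
  nodes : Set S.Node
  comm : S.Node → S.Node → Prop
  nodes_valid : ∀ n ∈ nodes, S.IsNode n
  comm_mem : ∀ n1 n2, comm n1 n2 → n1 ∈ nodes ∧ n2 ∈ nodes ∧ S.SendsTo n1 n2
  recv_unique : ∀ n2 ∈ nodes, ∀ u, S.term n2 = some (false, u) → ∃! n1, comm n1 n2
  succ_closed : ∀ n1 n2, S.SuccEdge n1 n2 → n2 ∈ nodes → n1 ∈ nodes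
  acyclic : ∀ n, ¬ Relation.TransGen
      (fun m1 m2 => comm m1 m2 ∨ (S.SuccEdge m1 m2 ∧ m1 ∈ nodes ∧ m2 ∈ nodes)) n n

variable {S : StrandSpace M}

/-- The causal edges (`→` or `⇒`) of a bundle. -/
def Bundle.edge (B : S.Bundle) (n1 n2 : S.Node) : Prop :=
  B.comm n1 n2 ∨ (S.SuccEdge n1 n2 ∧ n1 ∈ B.nodes ∧ n2 ∈ B.nodes)

/-- A causal path in a bundle. -/
def Bundle.CausalPath (B : S.Bundle) (l : List S.Node) : Prop :=
  l.Chain' B.edge ∧ ∀ n ∈ l, n ∈ B.nodes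

/-- The height of the bundle is at most `k`: every causal path has at most `k+1` nodes
(i.e. length at most `k`). -/
def Bundle.HeightLE (B : S.Bundle) (k : ℕ) : Prop :=
  ∀ l, B.CausalPath l → l.length ≤ k + 1

def Bundle.FiniteHeight (B : S.Bundle) : Prop := ∃ k, B.HeightLE k

noncomputable def Bundle.height (B : S.Bundle) : ℕ := sInf {k | B.HeightLE k}

/-- The height of a strand in a bundle: the largest `i` with `⟨s,i⟩ ∈ B` (0 if none). -/
noncomputable def Bundle.strandHeight (B : S.Bundle) (s : S.Strand) : ℕ :=
  sSup {i | (s, i) ∈ B.nodes}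

/-- The empty bundle. -/
def emptyBundle (S : StrandSpace M) : S.Bundle where
  nodes := ∅
  comm := fun _ _ => False
  nodes_valid := fun n hn => absurd hn (Set.notMem_empty n)
  comm_mem := fun _ _ h => h.elim
  recv_unique := fun n hn => absurd hn (Set.notMem_empty n)
  succ_closed := fun _ n2 _ h => absurd h (Set.notMem_empty n2)
  acyclic := by
    intro n h
    cases h with
    | single h1 => rcases h1 with h1 | ⟨_, h3, _⟩
                   · exact h1
                   · exact h3
    | tail _ h1 => rcases h1 with h1 | ⟨_, h3, _⟩
                   · exact h1
                   · exact h3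

/-- `B1 ⊑_f B2`: `f` maps each strand prefix in `B1` into `B2`, preserving terms
and `→` edges. -/
def Embeds (f : S.Strand ≃ S.Strand) (B1 B2 : S.Bundle) : Prop :=
  (∀ s i, (s, i) ∈ B1.nodes → (f s, i) ∈ B2.nodes ∧ S.term (s, i) = S.term (f s, i)) ∧
  (∀ s i s' j, B1.comm (s, i) (s', j) → B2.comm (f s, i) (f s', j))

/-- `B1 ↦ B2` via the agent-respecting bijection `f`: `B1 ⊑_f B2` and, for each
agent, at most one of its strands is extended, by at most (exactly) one node. -/
def StepVia (A : S.Strand → α) (f : S.Strand ≃ S.Strand) (B1 B2 : S.Bundle) : Prop :=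
  (∀ s, A (f s) = A s) ∧ Embeds f B1 B2 ∧
  ∀ s s', A s = A s' →
    B2.strandHeight (f s) ≠ B1.strandHeight s →
    B2.strandHeight (f s') ≠ B1.strandHeight s' →
    s = s' ∧ B2.strandHeight (f s) = B1.strandHeight s + 1

/-- `B1 ↦ B2`. -/
def Step (A : S.Strand → α) (B1 B2 : S.Bundle) : Prop := ∃ f, StepVia A f B1 B2

/-- A chain `B_0 ↦ B_1 ↦ ⋯` starting from the empty bundle. -/
structure Chain (A : S.Strand → α) where
  B : ℕ → S.Bundle
  init : B 0 = emptyBundle S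
  step : ∀ k, Step A (B k) (B (k + 1))

/-- The event (if any) performed by agent `a` in the step `B1 ↦ B2`:
the term of the single new node on a strand of `a`. -/
noncomputable def stepEvent (A : S.Strand → α) (B1 B2 : S.Bundle) (a : α) :
    Option (Bool × M) := by
  classical
  exact if h : ∃ p : (S.Strand ≃ S.Strand) × S.Strand,
      StepVia A p.1 B1 B2 ∧ A p.2 = a ∧
      B2.strandHeight (p.1 p.2) = B1.strandHeight p.2 + 1 then
    S.term (h.choose.1 h.choose.2, B2.strandHeight (h.choose.1 h.choose.2))
  else none

/-- The history of agent `a` at time `m` along a chain. -/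
noncomputable def Chain.hist {A : S.Strand → α} (C : Chain (S := S) A) (a : α) :
    ℕ → List (Bool × M)
  | 0 => []
  | m + 1 => C.hist a m ++ (stepEvent A (C.B m) (C.B (m + 1)) a).toList

end StrandSpace

/-- A run: a local state (history of events) for each agent at each time.
`(true, u)` is `sent(u)` and `(false, u)` is `recv(u)`. -/
def Run (α M : Type) := ℕ → α → List (Bool × M)

variable {M α : Type}

/-- MP1–MP3 with respect to generating history sets `V`. -/
def MP (V : α → Set (List (Bool × M))) (r : Run α M) : Prop :=
  (∀ a m, r m a ∈ V a) ∧
  (∀ a m u, (false, u) ∈ r m a → ∃ b, (true, u) ∈ r m b) ∧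
  (∀ a, r 0 a = []) ∧
  (∀ a m, r (m + 1) a = r m a ∨ ∃ e, r (m + 1) a = r m a ++ [e])

/-- The strand system generated by history sets `V`: all runs satisfying MP1–3. -/
def generated (V : α → Set (List (Bool × M))) : Set (Run α M) := {r | MP V r}

def IsStrandSystem (R : Set (Run α M)) : Prop :=
  ∃ V : α → Set (List (Bool × M)), R = generated V

/-- The run associated with a chain. -/
noncomputable def StrandSpace.Chain.run {S : StrandSpace M} {A : S.Strand → α}
    (C : StrandSpace.Chain (S := S) A) : Run α M := fun m a => C.hist a m

/-- `R(Σ, A, A)`: the translation of the strand space `S` under agent assignment `A`. -/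
def systemOf (S : StrandSpace M) (A : S.Strand → α) : Set (Run α M) :=
  {r | ∃ C : StrandSpace.Chain (S := S) A, C.run = r}

end StrandPaper

open StrandPaper StrandPaper.StrandSpace

/-- A global state `σ` (one history per strand-as-agent) is message-equivalent to a
bundle `B`: each strand's history has length equal to the strand's height in `B`, and
its `i`-th event corresponds to the signed term of the `(i+1)`-st node of the strand. -/
def MsgEquiv {M : Type} {S : StrandSpace M} (σ : S.Strand → List (Bool × M))
    (B : S.Bundle) : Prop :=
  ∀ s : S.Strand, (σ s).length = B.strandHeight s ∧
    ∀ i : ℕ, i < (σ s).length → (σ s)[i]? = S.term (s, i + 1)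

namespace StrandPaper.StrandSpace

variable {M : Type} {S : StrandSpace M}

namespace Bundle

theorem bddAbove_strand (B : S.Bundle) (s : S.Strand) : BddAbove {i | (s, i) ∈ B.nodes} :=
  ⟨(S.tr s).length, fun _ hi => (B.nodes_valid _ hi).2⟩

variable {B : S.Bundle} {s : S.Strand}

theorem le_strandHeight {i : ℕ} (h : (s, i) ∈ B.nodes) : i ≤ B.strandHeight s :=
  le_csSup (B.bddAbove_strand s) h

theorem strandHeight_mem (h : B.strandHeight s ≠ 0) : (s, B.strandHeight s) ∈ B.nodes := by
  refine Nat.sSup_mem ?_ (B.bddAbove_strand s)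
  by_contra hempty
  rw [Set.not_nonempty_iff_eq_empty] at hempty
  exact h (by rw [strandHeight, hempty, csSup_empty, bot_eq_zero])

theorem mem_of_mem_of_le {i j : ℕ} (hj : (s, j) ∈ B.nodes) (hi : 1 ≤ i) (hij : i ≤ j) :
    (s, i) ∈ B.nodes := by
  induction j, hij using Nat.le_induction with
  | base => exact hj
  | succ j hij ih =>
    have hvalid := B.nodes_valid _ hj
    exact ih (B.succ_closed (s, j) (s, j + 1)
      ⟨rfl, rfl, ⟨by omega, Nat.le_of_succ_le hvalid.2⟩, hvalid⟩ hj)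

theorem mem_nodes_iff {i : ℕ} : (s, i) ∈ B.nodes ↔ 1 ≤ i ∧ i ≤ B.strandHeight s :=
  ⟨fun h => ⟨(B.nodes_valid _ h).1, le_strandHeight h⟩,
    fun ⟨h1, h2⟩ => mem_of_mem_of_le (strandHeight_mem (by omega)) h1 h2⟩

theorem strandHeight_le_length (B : S.Bundle) (s : S.Strand) :
    B.strandHeight s ≤ (S.tr s).length := by
  by_cases h : B.strandHeight s = 0
  · omega
  · exact (B.nodes_valid _ (strandHeight_mem h)).2

theorem strandHeight_mono {B₁ B₂ : S.Bundle} (h : B₁.nodes ⊆ B₂.nodes) (s : S.Strand) :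
    B₁.strandHeight s ≤ B₂.strandHeight s := by
  by_cases h0 : B₁.strandHeight s = 0
  · omega
  · exact le_strandHeight (h (strandHeight_mem h0))

theorem mem_of_edge {n₁ n₂ : S.Node} (h : B.edge n₁ n₂) :
    n₁ ∈ B.nodes ∧ n₂ ∈ B.nodes := by
  rcases h with h | ⟨-, h₁, h₂⟩
  · exact ⟨(B.comm_mem _ _ h).1, (B.comm_mem _ _ h).2.1⟩
  · exact ⟨h₁, h₂⟩

theorem ext {B₁ B₂ : S.Bundle} (hn : B₁.nodes = B₂.nodes) (hc : B₁.comm = B₂.comm) :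
    B₁ = B₂ := by
  cases B₁; cases B₂
  subst hn hc
  rfl

theorem heightLE_of_edge_lt (w : S.Node → ℕ) {k : ℕ}
    (hw : ∀ n₁ n₂, B.edge n₁ n₂ → w n₁ < w n₂) (hk : ∀ n ∈ B.nodes, w n ≤ k) :
    B.HeightLE k := by
  intro l hl
  have hsorted : (l.map w).Pairwise (· < ·) :=
    List.isChain_iff_pairwise.mp ((List.isChain_map w).mpr (hl.1.imp hw))
  have hsub : (l.map w).toFinset ⊆ Finset.range (k + 1) := by
    intro x hx
    obtain ⟨n, hn, rfl⟩ := List.mem_map.mp (List.mem_toFinset.mp hx)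
    exact Finset.mem_range.mpr (Nat.lt_succ_of_le (hk n (hl.2 n hn)))
  simpa [List.toFinset_card_of_nodup (hsorted.imp ne_of_lt)] using Finset.card_le_card hsub

end Bundle

theorem strandHeight_emptyBundle (s : S.Strand) : (emptyBundle S).strandHeight s = 0 := by
  simp [Bundle.strandHeight, emptyBundle]

theorem msgEquiv_take (B : S.Bundle) :
    MsgEquiv (fun s => (S.tr s).take (B.strandHeight s)) B := by
  intro s
  have hlen : ((S.tr s).take (B.strandHeight s)).length = B.strandHeight s := by
    simpa using B.strandHeight_le_length s
  refine ⟨hlen, fun i hi => ?_⟩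
  rw [hlen] at hi
  simp [term, hi]

namespace StepVia

variable {f : S.Strand ≃ S.Strand} {B₁ B₂ : S.Bundle}

theorem apply_eq (h : StepVia id f B₁ B₂) (s : S.Strand) : f s = s := h.1 s

theorem comm_le (h : StepVia id f B₁ B₂) : B₁.comm ≤ B₂.comm := fun n₁ n₂ hc => by
  simpa only [h.apply_eq] using h.2.1.2 n₁.1 n₁.2 n₂.1 n₂.2 hc

theorem strandHeight_eq_or_eq_succ (h : StepVia id f B₁ B₂) (s : S.Strand) :
    B₂.strandHeight s = B₁.strandHeight s ∨
      B₂.strandHeight s = B₁.strandHeight s + 1 := by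
  by_cases he : B₂.strandHeight s = B₁.strandHeight s
  · exact Or.inl he
  · have he' : B₂.strandHeight (f s) ≠ B₁.strandHeight s := by rwa [h.apply_eq]
    simpa only [h.apply_eq] using Or.inr (h.2.2 s s rfl he' he').2

theorem mem_of_succEdge (h : StepVia id f B₁ B₂) {n₁ n₂ : S.Node}
    (hs : S.SuccEdge n₁ n₂) (h₂ : n₂ ∈ B₂.nodes) : n₁ ∈ B₁.nodes := by
  obtain ⟨s, i⟩ := n₁
  obtain ⟨s₂, i₂⟩ := n₂
  obtain ⟨hs₁, hs₂, ⟨hi, -⟩, -⟩ := hs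
  dsimp only at hs₁ hs₂ hi
  subst hs₁ hs₂
  have := Bundle.le_strandHeight h₂
  rcases h.strandHeight_eq_or_eq_succ s₂ with he | he <;>
    exact Bundle.mem_nodes_iff.mpr ⟨hi, by omega⟩

theorem stepEvent_of_strandHeight_eq_succ (h : StepVia id f B₁ B₂) {s : S.Strand}
    (hs : B₂.strandHeight s = B₁.strandHeight s + 1) :
    stepEvent id B₁ B₂ s = S.term (s, B₁.strandHeight s + 1) := by
  have hex : ∃ p : (S.Strand ≃ S.Strand) × S.Strand,
      StepVia id p.1 B₁ B₂ ∧ id p.2 = s ∧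
        B₂.strandHeight (p.1 p.2) = B₁.strandHeight p.2 + 1 :=
    ⟨(f, s), h, rfl, by rwa [h.apply_eq]⟩
  rw [stepEvent, dif_pos hex]
  obtain ⟨hstep, hchosen, hheight⟩ := hex.choose_spec
  rw [hstep.apply_eq, show hex.choose.2 = s from hchosen] at hheight ⊢
  rw [hheight]

end StepVia

theorem stepEvent_id_of_strandHeight_eq {B₁ B₂ : S.Bundle} {s : S.Strand}
    (hs : B₂.strandHeight s = B₁.strandHeight s) : stepEvent id B₁ B₂ s = none := by
  rw [stepEvent, dif_neg]
  rintro ⟨⟨f, s'⟩, hstep, hs', hheight⟩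
  dsimp only [id] at hs' hheight
  subst hs'
  rw [hstep.apply_eq] at hheight
  omega

theorem stepVia_id_refl {B₁ B₂ : S.Bundle} (hn : B₁.nodes ⊆ B₂.nodes)
    (hc : B₁.comm ≤ B₂.comm) (hh : ∀ s, B₂.strandHeight s ≤ B₁.strandHeight s + 1) :
    StepVia (id : S.Strand → S.Strand) (Equiv.refl _) B₁ B₂ := by
  refine ⟨fun _ => rfl, ⟨fun _ _ hi => ⟨hn hi, rfl⟩, fun _ _ _ _ hc' => hc _ _ hc'⟩, ?_⟩
  rintro s s' rfl hne -
  have := Bundle.strandHeight_mono hn s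
  have := hh s
  exact ⟨rfl, by simp only [Equiv.refl_apply] at hne ⊢; omega⟩

namespace Chain

variable (C : Chain (S := S) (id : S.Strand → S.Strand))

theorem hist_eq_take (s : S.Strand) (m : ℕ) :
    C.hist s m = (S.tr s).take ((C.B m).strandHeight s) := by
  induction m with
  | zero => simp [hist, C.init, strandHeight_emptyBundle]
  | succ m ih =>
    obtain ⟨f, hf⟩ := C.step m
    rcases hf.strandHeight_eq_or_eq_succ s with he | he
    · simp [hist, ih, he, stepEvent_id_of_strandHeight_eq he]
    · rw [hist, ih, hf.stepEvent_of_strandHeight_eq_succ he, he, List.take_add_one]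
      simp [term]

theorem msgEquiv_hist (m : ℕ) : MsgEquiv (fun s => C.hist s m) (C.B m) := by
  simpa only [C.hist_eq_take] using msgEquiv_take (C.B m)

theorem comm_monotone : Monotone fun k => (C.B k).comm :=
  monotone_nat_of_le_succ fun k => (C.step k).choose_spec.comm_le

noncomputable def entryTime (n : S.Node) : ℕ := sInf {k | n ∈ (C.B k).nodes}

variable {C} {m : ℕ} {n n₁ n₂ : S.Node}

theorem mem_entryTime (h : n ∈ (C.B m).nodes) : n ∈ (C.B (C.entryTime n)).nodes :=
  Nat.sInf_mem (s := {k | n ∈ (C.B k).nodes}) ⟨m, h⟩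

theorem entryTime_le (h : n ∈ (C.B m).nodes) : C.entryTime n ≤ m :=
  Nat.sInf_le h

theorem entryTime_ne_zero (h : n ∈ (C.B m).nodes) : C.entryTime n ≠ 0 := by
  intro h0
  have := mem_entryTime h
  rw [h0, C.init] at this
  exact this

/-- The message received at `n₂` has a unique sender in `C.B m`, and already one in the bundle
where `n₂` first appears; these coincide. -/
theorem entryTime_le_of_comm (hc : (C.B m).comm n₁ n₂) :
    C.entryTime n₁ ≤ C.entryTime n₂ := by
  obtain ⟨-, h₂, u, -, hu₂⟩ := (C.B m).comm_mem n₁ n₂ hc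
  obtain ⟨n₁', hc', -⟩ :=
    (C.B (C.entryTime n₂)).recv_unique n₂ (mem_entryTime h₂) u hu₂
  obtain rfl : n₁' = n₁ := ((C.B m).recv_unique n₂ h₂ u hu₂).unique
    (C.comm_monotone (entryTime_le h₂) _ _ hc') hc
  exact entryTime_le ((C.B _).comm_mem _ _ hc').1

theorem entryTime_lt_of_succEdge (hs : S.SuccEdge n₁ n₂) (h₂ : n₂ ∈ (C.B m).nodes) :
    C.entryTime n₁ < C.entryTime n₂ := by
  obtain ⟨k, hk⟩ := Nat.exists_eq_add_one_of_ne_zero (entryTime_ne_zero h₂)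
  have h₂' := mem_entryTime h₂
  rw [hk] at h₂'
  have := entryTime_le ((C.step k).choose_spec.mem_of_succEdge hs h₂')
  omega

variable (C) in
/-- Receiving nodes are weighted one above sending nodes that entered at the same time, so the
weight increases strictly along both kinds of causal edges. -/
noncomputable def weight (n : S.Node) : ℕ := by
  classical
  exact 2 * C.entryTime n + if ∃ u, S.term n = some (false, u) then 1 else 0

theorem weight_lt_of_edge (he : (C.B m).edge n₁ n₂) : C.weight n₁ < C.weight n₂ := by
  rcases he with hc | ⟨hs, -, h₂⟩
  · obtain ⟨-, -, u, hu₁, hu₂⟩ := (C.B m).comm_mem n₁ n₂ hc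
    have hsend : ¬ ∃ u, S.term n₁ = some (false, u) := by simp [hu₁]
    have := entryTime_le_of_comm hc
    simp only [weight, if_neg hsend, if_pos (⟨u, hu₂⟩ : ∃ u, S.term n₂ = some (false, u))]
    omega
  · have := entryTime_lt_of_succEdge hs h₂
    simp only [weight]
    split <;> split <;> omega

theorem weight_le (h : n ∈ (C.B m).nodes) : C.weight n ≤ 2 * m + 1 := by
  have := entryTime_le h
  simp only [weight]
  split <;> omega

variable (C) in
theorem heightLE (m : ℕ) : (C.B m).HeightLE (2 * m + 1) :=
  Bundle.heightLE_of_edge_lt C.weight (fun _ _ => weight_lt_of_edge) (fun _ => weight_le)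

end Chain

namespace Bundle

variable {B : S.Bundle} {k : ℕ}

theorem CausalPath.concat {l : List S.Node} {n₁ n₂ : S.Node} (hl : B.CausalPath (l ++ [n₁]))
    (he : B.edge n₁ n₂) : B.CausalPath (l ++ [n₁] ++ [n₂]) := by
  refine ⟨hl.1.append (List.isChain_singleton n₂) (by simpa using he), fun n hn => ?_⟩
  rcases List.mem_append.mp hn with hn | hn
  · exact hl.2 n hn
  · rw [List.mem_singleton.mp hn]
    exact (mem_of_edge he).2

noncomputable def depth (B : S.Bundle) (n : S.Node) : ℕ :=
  sSup {j | ∃ l, B.CausalPath (l ++ [n]) ∧ l.length = j}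

theorem depth_bound (hk : B.HeightLE k) (n : S.Node) :
    k ∈ upperBounds {j | ∃ l, B.CausalPath (l ++ [n]) ∧ l.length = j} := by
  rintro _ ⟨l, hl, rfl⟩
  simpa using hk _ hl

theorem depth_le (hk : B.HeightLE k) (n : S.Node) : B.depth n ≤ k :=
  csSup_le' (depth_bound hk n)

theorem depth_lt_of_edge (hk : B.HeightLE k) {n₁ n₂ : S.Node} (he : B.edge n₁ n₂) :
    B.depth n₁ < B.depth n₂ := by
  have hpath : B.CausalPath ([] ++ [n₁]) :=
    ⟨List.isChain_singleton n₁, by simpa using (mem_of_edge he).1⟩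
  obtain ⟨l, hl, hlen⟩ :=
    Nat.sSup_mem (s := {j | ∃ l, B.CausalPath (l ++ [n₁]) ∧ l.length = j})
      ⟨0, [], hpath, rfl⟩ ⟨k, depth_bound hk n₁⟩
  have : (l ++ [n₁]).length ≤ B.depth n₂ :=
    le_csSup ⟨k, depth_bound hk n₂⟩ ⟨l ++ [n₁], hl.concat he, rfl⟩
  simp only [depth, List.length_append, List.length_singleton] at this hlen ⊢
  omega

/-- Depth increases along causal edges, so the nodes of depth `< j` form a sub-bundle. -/
noncomputable def truncate (B : S.Bundle) (hk : B.HeightLE k) (j : ℕ) : S.Bundle where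
  nodes := {n | n ∈ B.nodes ∧ B.depth n < j}
  comm n₁ n₂ := B.comm n₁ n₂ ∧ B.depth n₂ < j
  nodes_valid n hn := B.nodes_valid n hn.1
  comm_mem := by
    rintro n₁ n₂ ⟨hc, hd⟩
    obtain ⟨h₁, h₂, hsend⟩ := B.comm_mem n₁ n₂ hc
    exact ⟨⟨h₁, (depth_lt_of_edge hk (Or.inl hc)).trans hd⟩, ⟨h₂, hd⟩, hsend⟩
  recv_unique := by
    rintro n₂ ⟨h₂, hd⟩ u hu
    obtain ⟨n₁, hc, huniq⟩ := B.recv_unique n₂ h₂ u hu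
    exact ⟨n₁, ⟨hc, hd⟩, fun n hn => huniq n hn.1⟩
  succ_closed := by
    rintro n₁ n₂ hs ⟨h₂, hd⟩
    have h₁ := B.succ_closed n₁ n₂ hs h₂
    exact ⟨h₁, (depth_lt_of_edge hk (Or.inr ⟨hs, h₁, h₂⟩)).trans hd⟩
  acyclic n hcycle := B.acyclic n <| Relation.TransGen.mono (fun _ _ => by
    rintro (⟨hc, -⟩ | ⟨hs, ⟨h₁, -⟩, h₂, -⟩)
    · exact Or.inl hc
    · exact Or.inr ⟨hs, h₁, h₂⟩) n n hcycle

theorem truncate_zero (hk : B.HeightLE k) : B.truncate hk 0 = emptyBundle S :=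
  ext (by ext; simp [truncate, emptyBundle]) (by ext; simp [truncate, emptyBundle])

theorem truncate_eq_self (hk : B.HeightLE k) : B.truncate hk (k + 1) = B := by
  have hd (n : S.Node) : B.depth n < k + 1 := Nat.lt_succ_of_le (depth_le hk n)
  exact ext (by ext; simp [truncate, hd]) (by ext; simp [truncate, hd])

theorem strandHeight_truncate_succ_le (hk : B.HeightLE k) (j : ℕ) (s : S.Strand) :
    (B.truncate hk (j + 1)).strandHeight s ≤ (B.truncate hk j).strandHeight s + 1 := by
  by_contra! hgt
  set h := (B.truncate hk (j + 1)).strandHeight s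
  have htop : (s, h) ∈ (B.truncate hk (j + 1)).nodes := mem_nodes_iff.mpr ⟨by omega, le_rfl⟩
  have hpred : (s, h - 1) ∈ (B.truncate hk (j + 1)).nodes :=
    mem_nodes_iff.mpr ⟨by omega, by omega⟩
  have hpred_new : ¬ B.depth (s, h - 1) < j := fun hd => by
    have := le_strandHeight (B := B.truncate hk j) ⟨hpred.1, hd⟩
    omega
  have hedge : B.edge (s, h - 1) (s, h) :=
    Or.inr ⟨⟨rfl, by dsimp only; omega, B.nodes_valid _ hpred.1, B.nodes_valid _ htop.1⟩,
      hpred.1, htop.1⟩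
  have := depth_lt_of_edge hk hedge
  have := htop.2
  omega

noncomputable def truncationChain (hk : B.HeightLE k) :
    Chain (S := S) (id : S.Strand → S.Strand) where
  B := B.truncate hk
  init := truncate_zero hk
  step j := ⟨_, stepVia_id_refl (fun _ hn => ⟨hn.1, by have := hn.2; omega⟩)
    (fun _ _ hc => ⟨hc.1, by have := hc.2; omega⟩) (strandHeight_truncate_succ_le hk j)⟩

end Bundle

end StrandPaper.StrandSpace

/-- Every global state arising in `R(Σ, Σ, id)` is message-equivalent to a
bundle of `Σ` of finite height, and conversely every finite-height bundle of `Σ` is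
message-equivalent to some global state of `R(Σ, Σ, id)`. -/
theorem global_states_are_bundles {M : Type} (S : StrandSpace M) :
    (∀ (C : Chain (S := S) (id : S.Strand → S.Strand)) (m : ℕ),
        ∃ B : S.Bundle, B.FiniteHeight ∧ MsgEquiv (fun s => C.hist s m) B) ∧
    (∀ B : S.Bundle, B.FiniteHeight →
        ∃ (C : Chain (S := S) (id : S.Strand → S.Strand)) (m : ℕ),
          MsgEquiv (fun s => C.hist s m) B) := by
  refine ⟨fun C m => ⟨C.B m, ⟨2 * m + 1, C.heightLE m⟩, C.msgEquiv_hist m⟩, ?_⟩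
  rintro B ⟨k, hk⟩
  refine ⟨B.truncationChain hk, k + 1, ?_⟩
  simpa only [Bundle.truncationChain, Bundle.truncate_eq_self] using
    (B.truncationChain hk).msgEquiv_hist (k + 1)
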